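/- If G is a partial cube with minimum degree δ, then the domination number of G satisfies γ(G) ≥ ⌈δ/2⌉. -/

import Mathlib

/-! Every dominating set `D` of a graph with minimum degree `δ` in which
`|N(w) ∩ N[u]| ≤ 2` for all `u ≠ w` has `δ ≤ 2|D|`: the neighbours of a vertex `w ∉ D` are
dominated by the vertices of `D`, each of which covers at most two of them.
Hypercubes and all their induced subgraphs have this property, since two neighbours `x ≠ y`
of `w` flip different coordinates of `w`, and a vertex `u ≠ w` dominating a neighbour of `w`
differs from `w` exactly in the flipped coordinate and at most one other. -/

open SimpleGraph

def Qcube (n : ℕ) : SimpleGraph (Fin n → Bool) where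
  Adj x y := hammingDist x y = 1
  symm := ⟨fun x y h => by show hammingDist y x = 1; rwa [hammingDist_comm]⟩
  loopless := ⟨fun x h => by simp [hammingDist_self] at h⟩

namespace SimpleGraph

variable {V : Type*} (G : SimpleGraph V)

def IsDominatingSet (D : Set V) : Prop :=
  ∀ v, v ∈ D ∨ ∃ u ∈ D, G.Adj u v

variable {G} [Fintype V] [DecidableEq V] [DecidableRel G.Adj]

theorem degree_le_two_mul_ncard_of_isDominatingSet
    (hG : ∀ u w, u ≠ w → ((G.neighborFinset w).filter fun x => x = u ∨ G.Adj u x).card ≤ 2)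
    {D : Set V} (hD : G.IsDominatingSet D) {w : V} (hw : w ∉ D) :
    G.degree w ≤ 2 * D.ncard := by
  classical
  have hcover : G.neighborFinset w ⊆ D.toFinset.biUnion
      fun u => (G.neighborFinset w).filter fun x => x = u ∨ G.Adj u x := by
    intro x hx
    rcases hD x with hxD | ⟨u, huD, hux⟩
    · exact Finset.mem_biUnion.mpr ⟨x, Set.mem_toFinset.mpr hxD, by simp [hx]⟩
    · exact Finset.mem_biUnion.mpr ⟨u, Set.mem_toFinset.mpr huD, by simp [hx, hux]⟩
  calc G.degree w = (G.neighborFinset w).card := (G.card_neighborFinset_eq_degree w).symm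
    _ ≤ D.toFinset.card * 2 := (Finset.card_le_card hcover).trans <|
        Finset.card_biUnion_le_card_mul _ _ _ fun u hu =>
          hG u w fun h => hw (h ▸ Set.mem_toFinset.mp hu)
    _ = 2 * D.ncard := by rw [Set.ncard_eq_toFinset_card', mul_comm]

theorem minDegree_le_two_mul_ncard_of_isDominatingSet
    (hG : ∀ u w, u ≠ w → ((G.neighborFinset w).filter fun x => x = u ∨ G.Adj u x).card ≤ 2)
    {D : Set V} (hD : G.IsDominatingSet D) :
    G.minDegree ≤ 2 * D.ncard := by
  by_cases hD_univ : D = Set.univ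
  · rcases isEmpty_or_nonempty V with hV | hV
    · simp [minDegree_of_subsingleton]
    · have := G.minDegree_lt_card
      rw [hD_univ, Set.ncard_univ, Nat.card_eq_fintype_card]
      omega
  · obtain ⟨w, hw⟩ := (Set.ne_univ_iff_exists_notMem D).mp hD_univ
    exact (G.minDegree_le_degree w).trans (degree_le_two_mul_ncard_of_isDominatingSet hG hD hw)

end SimpleGraph

section Hypercube

variable {n : ℕ}

theorem hammingDist_eq_one_iff {ι : Type*} [Fintype ι] {β : ι → Type*} [∀ i, DecidableEq (β i)]
    {x y : ∀ i, β i} :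
    hammingDist x y = 1 ↔ ∃ k, ∀ j, x j ≠ y j ↔ j = k := by
  simp only [hammingDist, Finset.card_eq_one, Finset.ext_iff, Finset.mem_filter,
    Finset.mem_univ, true_and, Finset.mem_singleton]

theorem Qcube.eq_update_not_of_forall_ne_iff {w x : Fin n → Bool} {k : Fin n}
    (hk : ∀ j, w j ≠ x j ↔ j = k) : x = Function.update w k (!w k) := by
  funext j
  by_cases hj : j = k
  · subst hj
    rw [Function.update_self, Bool.eq_not_iff]
    exact Ne.symm ((hk j).mpr rfl)
  · rw [Function.update_of_ne hj]
    exact not_not.mp fun h => hj ((hk j).mp (Ne.symm h))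

theorem Qcube.apply_ne_of_adj {u w x : Fin n → Bool} {k : Fin n}
    (hk : ∀ j, w j ≠ x j ↔ j = k) (hux : (Qcube n).Adj u x) (huw : u ≠ w) : u k ≠ w k := by
  obtain ⟨m, hm⟩ := hammingDist_eq_one_iff.mp hux
  have hu : ∀ j, j ≠ m → u j = x j := fun j hj => not_not.mp fun h => hj ((hm j).mp h)
  have hx : ∀ j, j ≠ k → x j = w j := fun j hj => not_not.mp fun h => hj ((hk j).mp (Ne.symm h))
  intro huk
  by_cases hkm : k = m
  · subst hkm
    refine huw (funext fun j => ?_)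
    by_cases hj : j = k
    · exact hj ▸ huk
    · rw [hu j hj, hx j hj]
  · exact (hk k).mpr rfl (huk.symm.trans (hu k hkm))

theorem Qcube.card_le_two_of_adj_of_eq_or_adj {u w : Fin n → Bool} (huw : u ≠ w) (X : Finset (Fin n → Bool))
    (hX : ∀ x ∈ X, (Qcube n).Adj w x ∧ (x = u ∨ (Qcube n).Adj u x)) :
    X.card ≤ 2 := by
  rcases X.eq_empty_or_nonempty with rfl | ⟨x₀, hx₀⟩
  · simp
  have hdist : hammingDist u w ≤ 2 := by
    have := hammingDist_triangle u x₀ w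
    have hx₀w : hammingDist x₀ w = 1 := by rw [hammingDist_comm]; exact (hX x₀ hx₀).1
    rcases (hX x₀ hx₀).2 with rfl | hux₀
    · omega
    · change hammingDist u x₀ = 1 at hux₀
      omega
  have hsub : X ⊆ ({k | u k ≠ w k} : Finset (Fin n)).image
      fun k => Function.update w k (!w k) := by
    intro x hx
    obtain ⟨hwx, hux⟩ := hX x hx
    obtain ⟨k, hk⟩ := hammingDist_eq_one_iff.mp hwx
    refine Finset.mem_image.mpr ⟨k, Finset.mem_filter.mpr ⟨Finset.mem_univ _, ?_⟩,
      (Qcube.eq_update_not_of_forall_ne_iff hk).symm⟩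
    rcases hux with rfl | hux
    · exact Ne.symm ((hk k).mpr rfl)
    · exact Qcube.apply_ne_of_adj hk hux huw
  calc X.card ≤ _ := Finset.card_le_card hsub
    _ ≤ hammingDist u w := Finset.card_image_le
    _ ≤ 2 := hdist

theorem Qcube.card_induce_neighborFinset_filter_le_two (S : Set (Fin n → Bool)) [Fintype S]
    [DecidableRel ((Qcube n).induce S).Adj] (u w : S) (huw : u ≠ w) :
    ((((Qcube n).induce S).neighborFinset w).filter
      fun x => x = u ∨ ((Qcube n).induce S).Adj u x).card ≤ 2 := by
  rw [← Finset.card_image_of_injective _ Subtype.val_injective]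
  refine Qcube.card_le_two_of_adj_of_eq_or_adj (Subtype.coe_ne_coe.mpr huw) _ fun x hx => ?_
  obtain ⟨y, hy, rfl⟩ := Finset.mem_image.mp hx
  obtain ⟨hwy, huy⟩ := Finset.mem_filter.mp hy
  exact ⟨(mem_neighborFinset _ w y).mp hwy, huy.imp (congrArg Subtype.val) id⟩

end Hypercube

theorem stmt5_general (n : ℕ) (S : Set (Fin n → Bool)) [Fintype ↥S]
    [DecidableRel ((Qcube n).induce S).Adj] :
    (((Qcube n).induce S).minDegree + 1) / 2 ≤
      sInf {k : ℕ | ∃ D : Set ↥S,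
        (∀ v : ↥S, v ∈ D ∨ ∃ u ∈ D, ((Qcube n).induce S).Adj u v) ∧ D.ncard = k} := by
  refine le_csInf ⟨_, Set.univ, fun v => Or.inl trivial, rfl⟩ ?_
  rintro k ⟨D, hD, rfl⟩
  have := minDegree_le_two_mul_ncard_of_isDominatingSet
    (Qcube.card_induce_neighborFinset_filter_le_two S) (D := D) hD
  omega

/-- If `G` is a partial cube with minimum degree `δ`, then the domination number
of `G` satisfies `γ(G) ≥ ⌈δ/2⌉`. -/
theorem stmt5 (n : ℕ) (S : Set (Fin n → Bool)) [Fintype ↥S]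
    [DecidableRel ((Qcube n).induce S).Adj]
    (hconn : ((Qcube n).induce S).Connected)
    (hiso : ∀ u v : ↥S, ((Qcube n).induce S).dist u v = (Qcube n).dist u.val v.val) :
    (((Qcube n).induce S).minDegree + 1) / 2 ≤
      sInf {k : ℕ | ∃ D : Set ↥S,
        (∀ v : ↥S, v ∈ D ∨ ∃ u ∈ D, ((Qcube n).induce S).Adj u v) ∧ D.ncard = k} :=
  stmt5_general n S
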